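/- arXiv:2408.00991 — 2 statements merged into one kernel-verified Lean document; each statement's English description precedes it below -/
import Mathlib

section
/- Assume Assumption A holds for the true model (c,T), and the estimated kernel T̂ satisfies ‖T(·|x,u,μ) − T̂(·|x,u,μ)‖ ≤ λ for all (x,u,μ). Then for every agent-level policy γ ∈ Γ: (i) ‖F(μ,γ) − F̂(μ,γ)‖ ≤ λ for every μ ∈ P(X), and (ii) ‖F(μ,γ) − F(μ′,γ)‖ ≤ (δ_T + K_f)‖μ−μ′‖ for every μ, μ′ ∈ P(X). -/
open scoped BigOperators
open MeasureTheory Filter Topology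

/-- Probability distributions on a finite set, as nonnegative functions summing to one. -/
abbrev PM (X : Type*) [Fintype X] : Type _ :=
  {p : X → ℝ // (∀ x, 0 ≤ p x) ∧ ∑ x, p x = 1}

/-- The distance `(1/2) Σ_x |f x - g x|` (total variation / W₁ for the discrete metric). -/
noncomputable def mdist {X : Type*} [Fintype X] (f g : X → ℝ) : ℝ :=
  (1 / 2) * ∑ x, |f x - g x|

/-- The one-step mean-field dynamics `F(μ,γ)(y) = Σ_{x,u} T(y|x,u,μ) γ(u|x) μ(x)`,
as a raw density. -/
noncomputable def mfF {X U : Type*} [Fintype X] [Fintype U]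
    (T : X → U → PM X → PM X) (μ : PM X) (γ : X → PM U) : X → ℝ :=
  fun y => ∑ x, ∑ u, (T x u μ).1 y * (γ x).1 u * μ.1 x

section Aux

variable {X U : Type*} [Fintype X] [Fintype U]

lemma mdist_nonneg' (f g : X → ℝ) : 0 ≤ mdist f g := by
  unfold mdist; positivity

lemma mdist_self' (f : X → ℝ) : mdist f f = 0 := by
  simp [mdist]

lemma sum_abs_le_of_mdist {f g : X → ℝ} {c : ℝ} (h : mdist f g ≤ c) :
    ∑ x, |f x - g x| ≤ 2 * c := by
  unfold mdist at h; linarith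

lemma mdist_le_one' {p q : X → ℝ} (hp : ∀ x, 0 ≤ p x) (hq : ∀ x, 0 ≤ q x)
    (hps : ∑ x, p x = 1) (hqs : ∑ x, q x = 1) : mdist p q ≤ 1 := by
  unfold mdist
  have h : ∑ x, |p x - q x| ≤ ∑ x, (p x + q x) := by
    refine Finset.sum_le_sum fun x _ => ?_
    rw [abs_sub_le_iff]
    constructor <;> nlinarith [hp x, hq x]
  rw [Finset.sum_add_distrib, hps, hqs] at h
  linarith

/-- The row kernel `K_μ(x, ·) = Σ_u T(·|x,u,μ) γ(u|x)`. -/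
noncomputable def rowK (T : X → U → PM X → PM X) (ν : PM X) (g : X → PM U) (z : X) : X → ℝ :=
  fun y => ∑ u, (T z u ν).1 y * (g z).1 u

lemma rowK_nonneg (T : X → U → PM X → PM X) (ν : PM X) (g : X → PM U) (z y : X) :
    0 ≤ rowK T ν g z y :=
  Finset.sum_nonneg fun u _ => mul_nonneg ((T z u ν).2.1 y) ((g z).2.1 u)

lemma rowK_sum (T : X → U → PM X → PM X) (ν : PM X) (g : X → PM U) (z : X) :
    ∑ y, rowK T ν g z y = 1 := by
  unfold rowK
  rw [Finset.sum_comm]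
  have h : ∀ u : U, ∑ y, (T z u ν).1 y * (g z).1 u = (g z).1 u := fun u => by
    rw [← Finset.sum_mul, (T z u ν).2.2, one_mul]
  simp only [h]
  exact (g z).2.2

lemma rowK_mdist_le_one (T : X → U → PM X → PM X) (ν : PM X) (g : X → PM U) (z z' : X) :
    mdist (rowK T ν g z) (rowK T ν g z') ≤ 1 :=
  mdist_le_one' (rowK_nonneg T ν g z) (rowK_nonneg T ν g z')
    (rowK_sum T ν g z) (rowK_sum T ν g z')

end Aux

/-- one-step continuity and mismatch bounds for the mean-field dynamics. -/
theorem stmt_15 {X U : Type*} [Fintype X] [Fintype U]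
    (T That : X → U → PM X → PM X) (Kf δT lam : ℝ)
    -- Assumption A (kernel part) for `T`
    (hTlip : ∀ (x : X) (u : U) (μ μ' : PM X),
      mdist (T x u μ).1 (T x u μ').1 ≤ Kf * mdist μ.1 μ'.1)
    -- `δT` is the Dobrushin coefficient of `T`
    (hδT : δT = ⨆ μ : PM X, ⨆ γ : X → PM U, ⨆ x : X, ⨆ x' : X,
      mdist (fun y => ∑ u, (T x u μ).1 y * (γ x).1 u)
            (fun y => ∑ u, (T x' u μ).1 y * (γ x').1 u))
    -- uniform kernel mismatch
    (hmis : ∀ (x : X) (u : U) (μ : PM X), mdist (T x u μ).1 (That x u μ).1 ≤ lam) :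
    ∀ γ : X → PM U,
      (∀ μ : PM X, mdist (mfF T μ γ) (mfF That μ γ) ≤ lam) ∧
      (∀ μ μ' : PM X, mdist (mfF T μ γ) (mfF T μ' γ) ≤ (δT + Kf) * mdist μ.1 μ'.1) := by
  intro γ
  -- rewrite the Dobrushin coefficient via `rowK`
  have hδT' : δT = ⨆ ν : PM X, ⨆ g : X → PM U, ⨆ z : X, ⨆ z' : X,
      mdist (rowK T ν g z) (rowK T ν g z') := hδT
  -- the Dobrushin coefficient dominates each row distance
  have hD : ∀ (ν : PM X) (g : X → PM U) (z z' : X),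
      mdist (rowK T ν g z) (rowK T ν g z') ≤ δT := by
    intro ν g z z'
    haveI : Nonempty X := ⟨z⟩
    haveI : Nonempty (PM X) := ⟨ν⟩
    haveI : Nonempty (X → PM U) := ⟨g⟩
    rw [hδT']
    have b1 : ∀ (ν : PM X) (g : X → PM U) (z : X),
        (⨆ z' : X, mdist (rowK T ν g z) (rowK T ν g z')) ≤ 1 :=
      fun ν g z => ciSup_le fun z' => rowK_mdist_le_one T ν g z z'
    have b2 : ∀ (ν : PM X) (g : X → PM U),
        (⨆ z : X, ⨆ z' : X, mdist (rowK T ν g z) (rowK T ν g z')) ≤ 1 :=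
      fun ν g => ciSup_le fun z => b1 ν g z
    have b3 : ∀ ν : PM X,
        (⨆ g : X → PM U, ⨆ z : X, ⨆ z' : X, mdist (rowK T ν g z) (rowK T ν g z')) ≤ 1 :=
      fun ν => ciSup_le fun g => b2 ν g
    calc mdist (rowK T ν g z) (rowK T ν g z')
        ≤ ⨆ z' : X, mdist (rowK T ν g z) (rowK T ν g z') :=
          le_ciSup (f := fun z' : X => mdist (rowK T ν g z) (rowK T ν g z'))
            ⟨1, by rintro _ ⟨w, rfl⟩; exact rowK_mdist_le_one T ν g z w⟩ z'
      _ ≤ ⨆ z : X, ⨆ z' : X, mdist (rowK T ν g z) (rowK T ν g z') :=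
          le_ciSup (f := fun z : X => ⨆ z' : X, mdist (rowK T ν g z) (rowK T ν g z'))
            ⟨1, by rintro _ ⟨w, rfl⟩; exact b1 ν g w⟩ z
      _ ≤ ⨆ g : X → PM U, ⨆ z : X, ⨆ z' : X, mdist (rowK T ν g z) (rowK T ν g z') :=
          le_ciSup (f := fun g : X → PM U =>
              ⨆ z : X, ⨆ z' : X, mdist (rowK T ν g z) (rowK T ν g z'))
            ⟨1, by rintro _ ⟨w, rfl⟩; exact b2 ν w⟩ g
      _ ≤ ⨆ ν : PM X, ⨆ g : X → PM U, ⨆ z : X, ⨆ z' : X,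
            mdist (rowK T ν g z) (rowK T ν g z') :=
          le_ciSup (f := fun ν : PM X => ⨆ g : X → PM U,
              ⨆ z : X, ⨆ z' : X, mdist (rowK T ν g z) (rowK T ν g z'))
            ⟨1, by rintro _ ⟨w, rfl⟩; exact b3 w⟩ ν
  -- `mfF` in terms of `rowK`
  have hmfF : ∀ (ρ : PM X) (y : X), mfF T ρ γ y = ∑ x, rowK T ρ γ x y * ρ.1 x := by
    intro ρ y
    unfold mfF rowK
    exact Finset.sum_congr rfl fun x _ => (Finset.sum_mul _ _ _).symm
  constructor
  -- Part (i): mismatch bound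
  · intro μ
    have hdiff : ∀ y, mfF T μ γ y - mfF That μ γ y
        = ∑ x, ∑ u, ((T x u μ).1 y - (That x u μ).1 y) * ((γ x).1 u * μ.1 x) := by
      intro y
      unfold mfF
      rw [← Finset.sum_sub_distrib]
      refine Finset.sum_congr rfl fun x _ => ?_
      rw [← Finset.sum_sub_distrib]
      exact Finset.sum_congr rfl fun u _ => by ring
    have key : ∑ y, |mfF T μ γ y - mfF That μ γ y| ≤ 2 * lam := by
      calc ∑ y, |mfF T μ γ y - mfF That μ γ y|
          ≤ ∑ y, ∑ x, ∑ u, |(T x u μ).1 y - (That x u μ).1 y| * ((γ x).1 u * μ.1 x) := by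
            refine Finset.sum_le_sum fun y _ => ?_
            rw [hdiff y]
            refine le_trans (Finset.abs_sum_le_sum_abs _ _) ?_
            refine Finset.sum_le_sum fun x _ => ?_
            refine le_trans (Finset.abs_sum_le_sum_abs _ _) ?_
            refine Finset.sum_le_sum fun u _ => ?_
            rw [abs_mul, abs_of_nonneg (mul_nonneg ((γ x).2.1 u) (μ.2.1 x))]
        _ = ∑ x, ∑ u, (∑ y, |(T x u μ).1 y - (That x u μ).1 y|) * ((γ x).1 u * μ.1 x) := by
            rw [Finset.sum_comm]
            refine Finset.sum_congr rfl fun x _ => ?_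
            rw [Finset.sum_comm]
            refine Finset.sum_congr rfl fun u _ => ?_
            rw [← Finset.sum_mul]
        _ ≤ ∑ x, ∑ u, (2 * lam) * ((γ x).1 u * μ.1 x) := by
            refine Finset.sum_le_sum fun x _ => Finset.sum_le_sum fun u _ => ?_
            exact mul_le_mul_of_nonneg_right (sum_abs_le_of_mdist (hmis x u μ))
              (mul_nonneg ((γ x).2.1 u) (μ.2.1 x))
        _ = 2 * lam := by
            have h1 : ∀ x, ∑ u, (2 * lam) * ((γ x).1 u * μ.1 x) = (2 * lam) * μ.1 x := by
              intro x
              rw [← Finset.mul_sum, ← Finset.sum_mul, (γ x).2.2, one_mul]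
            simp only [h1]
            rw [← Finset.mul_sum, μ.2.2, mul_one]
    unfold mdist
    linarith
  -- Part (ii): Lipschitz bound
  · intro μ μ'
    rcases eq_or_lt_of_le (mdist_nonneg' μ.1 μ'.1) with hm0 | hm0
    · -- μ = μ'
      have hsum0 : ∑ x, |μ.1 x - μ'.1 x| = 0 := by
        unfold mdist at hm0; linarith
      have hzero : ∀ x ∈ Finset.univ, |μ.1 x - μ'.1 x| = 0 :=
        (Finset.sum_eq_zero_iff_of_nonneg (fun x _ => abs_nonneg _)).mp hsum0
      have heq : μ = μ' := by
        apply Subtype.ext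
        funext x
        have := hzero x (Finset.mem_univ x)
        have := abs_eq_zero.mp this
        linarith
      subst heq
      simp [mdist_self']
    · -- main case: m > 0
      set m : ℝ := mdist μ.1 μ'.1 with hm
      have hmne : m ≠ 0 := ne_of_gt hm0
      set a : X → ℝ := fun x => max (μ.1 x - μ'.1 x) 0 with ha
      set b : X → ℝ := fun x => max (-(μ.1 x - μ'.1 x)) 0 with hb
      have hanneg : ∀ x, 0 ≤ a x := fun x => le_max_right _ _
      have hbnneg : ∀ x, 0 ≤ b x := fun x => le_max_right _ _
      have hab_sub : ∀ x, a x - b x = μ.1 x - μ'.1 x := fun x => max_zero_sub_max_neg_zero_eq_self _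
      have hab_add : ∀ x, a x + b x = |μ.1 x - μ'.1 x| := by
        intro x
        rcases le_total (μ.1 x - μ'.1 x) 0 with h | h
        · simp only [ha, hb]
          rw [max_eq_right h, max_eq_left (by linarith), abs_of_nonpos h, zero_add]
        · simp only [ha, hb]
          rw [max_eq_left h, max_eq_right (by linarith), abs_of_nonneg h, add_zero]
      have hsumabs : ∑ x, |μ.1 x - μ'.1 x| = 2 * m := by
        rw [hm]; unfold mdist; ring
      have hsumsub : ∑ x, (a x - b x) = 0 := by
        simp only [hab_sub]
        rw [Finset.sum_sub_distrib, μ.2.2, μ'.2.2, sub_self]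
      have hsumadd : ∑ x, (a x + b x) = 2 * m := by
        simp only [hab_add]; exact hsumabs
      rw [Finset.sum_sub_distrib] at hsumsub
      rw [Finset.sum_add_distrib] at hsumadd
      have hsa : ∑ x, a x = m := by linarith
      have hsb : ∑ x, b x = m := by linarith
      -- decomposition
      have hdec : ∀ y, mfF T μ γ y - mfF T μ' γ y
          = (∑ x, rowK T μ γ x y * (μ.1 x - μ'.1 x))
            + (∑ x, (rowK T μ γ x y - rowK T μ' γ x y) * μ'.1 x) := by
        intro y
        rw [hmfF μ y, hmfF μ' y, ← Finset.sum_add_distrib, ← Finset.sum_sub_distrib]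
        exact Finset.sum_congr rfl fun x _ => by ring
      -- bound on term B
      have hrowlip : ∀ x : X, ∑ y, |rowK T μ γ x y - rowK T μ' γ x y| ≤ 2 * (Kf * m) := by
        intro x
        have hB1 : ∀ y, rowK T μ γ x y - rowK T μ' γ x y
            = ∑ u, ((T x u μ).1 y - (T x u μ').1 y) * (γ x).1 u := by
          intro y
          unfold rowK
          rw [← Finset.sum_sub_distrib]
          exact Finset.sum_congr rfl fun u _ => by ring
        calc ∑ y, |rowK T μ γ x y - rowK T μ' γ x y|
            ≤ ∑ y, ∑ u, |(T x u μ).1 y - (T x u μ').1 y| * (γ x).1 u := by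
              refine Finset.sum_le_sum fun y _ => ?_
              rw [hB1 y]
              refine le_trans (Finset.abs_sum_le_sum_abs _ _) ?_
              refine Finset.sum_le_sum fun u _ => ?_
              rw [abs_mul, abs_of_nonneg ((γ x).2.1 u)]
          _ = ∑ u, (∑ y, |(T x u μ).1 y - (T x u μ').1 y|) * (γ x).1 u := by
              rw [Finset.sum_comm]
              refine Finset.sum_congr rfl fun u _ => ?_
              rw [← Finset.sum_mul]
          _ ≤ ∑ u, (2 * (Kf * m)) * (γ x).1 u := by
              refine Finset.sum_le_sum fun u _ => ?_
              exact mul_le_mul_of_nonneg_right (sum_abs_le_of_mdist (hTlip x u μ μ'))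
                ((γ x).2.1 u)
          _ = 2 * (Kf * m) := by rw [← Finset.mul_sum, (γ x).2.2, mul_one]
      have hB : ∑ y, |∑ x, (rowK T μ γ x y - rowK T μ' γ x y) * μ'.1 x| ≤ 2 * (Kf * m) := by
        calc ∑ y, |∑ x, (rowK T μ γ x y - rowK T μ' γ x y) * μ'.1 x|
            ≤ ∑ y, ∑ x, |rowK T μ γ x y - rowK T μ' γ x y| * μ'.1 x := by
              refine Finset.sum_le_sum fun y _ => ?_
              refine le_trans (Finset.abs_sum_le_sum_abs _ _) ?_
              refine Finset.sum_le_sum fun x _ => ?_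
              rw [abs_mul, abs_of_nonneg (μ'.2.1 x)]
          _ = ∑ x, (∑ y, |rowK T μ γ x y - rowK T μ' γ x y|) * μ'.1 x := by
              rw [Finset.sum_comm]
              refine Finset.sum_congr rfl fun x _ => ?_
              rw [← Finset.sum_mul]
          _ ≤ ∑ x, (2 * (Kf * m)) * μ'.1 x := by
              refine Finset.sum_le_sum fun x _ => ?_
              exact mul_le_mul_of_nonneg_right (hrowlip x) (μ'.2.1 x)
          _ = 2 * (Kf * m) := by rw [← Finset.mul_sum, μ'.2.2, mul_one]
      -- bound on term A
      have hid : ∀ y, ∑ x, rowK T μ γ x y * (μ.1 x - μ'.1 x)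
          = (1 / m) * ∑ x, ∑ x', (rowK T μ γ x y - rowK T μ γ x' y) * (a x * b x') := by
        intro y
        have e1 : ∑ x, ∑ x', (rowK T μ γ x y - rowK T μ γ x' y) * (a x * b x')
            = (∑ x, rowK T μ γ x y * a x) * (∑ x', b x')
              - (∑ x, a x) * (∑ x', rowK T μ γ x' y * b x') := by
          rw [Finset.sum_mul_sum, Finset.sum_mul_sum, ← Finset.sum_sub_distrib]
          refine Finset.sum_congr rfl fun x _ => ?_
          rw [← Finset.sum_sub_distrib]
          exact Finset.sum_congr rfl fun x' _ => by ring
        rw [e1, hsa, hsb]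
        have e2 : ∑ x, rowK T μ γ x y * (μ.1 x - μ'.1 x)
            = (∑ x, rowK T μ γ x y * a x) - (∑ x', rowK T μ γ x' y * b x') := by
          rw [← Finset.sum_sub_distrib]
          refine Finset.sum_congr rfl fun x _ => ?_
          rw [← hab_sub x]; ring
        rw [e2]
        field_simp
      have hA : ∑ y, |∑ x, rowK T μ γ x y * (μ.1 x - μ'.1 x)| ≤ 2 * (δT * m) := by
        have hstep : ∀ y, |∑ x, rowK T μ γ x y * (μ.1 x - μ'.1 x)|
            ≤ (1 / m) * ∑ x, ∑ x', |rowK T μ γ x y - rowK T μ γ x' y| * (a x * b x') := by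
          intro y
          rw [hid y, abs_mul, abs_of_nonneg (by positivity : (0:ℝ) ≤ 1 / m)]
          refine mul_le_mul_of_nonneg_left ?_ (by positivity)
          refine le_trans (Finset.abs_sum_le_sum_abs _ _) ?_
          refine Finset.sum_le_sum fun x _ => ?_
          refine le_trans (Finset.abs_sum_le_sum_abs _ _) ?_
          refine Finset.sum_le_sum fun x' _ => ?_
          rw [abs_mul, abs_of_nonneg (mul_nonneg (hanneg x) (hbnneg x'))]
        calc ∑ y, |∑ x, rowK T μ γ x y * (μ.1 x - μ'.1 x)|
            ≤ ∑ y, (1 / m) * ∑ x, ∑ x', |rowK T μ γ x y - rowK T μ γ x' y| * (a x * b x') :=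
              Finset.sum_le_sum fun y _ => hstep y
          _ = (1 / m) * ∑ x, ∑ x', (∑ y, |rowK T μ γ x y - rowK T μ γ x' y|) * (a x * b x') := by
              rw [← Finset.mul_sum]
              congr 1
              rw [Finset.sum_comm]
              refine Finset.sum_congr rfl fun x _ => ?_
              rw [Finset.sum_comm]
              refine Finset.sum_congr rfl fun x' _ => ?_
              rw [← Finset.sum_mul]
          _ ≤ (1 / m) * ∑ x, ∑ x', (2 * δT) * (a x * b x') := by
              refine mul_le_mul_of_nonneg_left ?_ (by positivity)
              refine Finset.sum_le_sum fun x _ => Finset.sum_le_sum fun x' _ => ?_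
              refine mul_le_mul_of_nonneg_right ?_ (mul_nonneg (hanneg x) (hbnneg x'))
              have := sum_abs_le_of_mdist (hD μ γ x x')
              linarith [this]
          _ = (1 / m) * ((2 * δT) * (m * m)) := by
              congr 1
              have : ∑ x, ∑ x', (2 * δT) * (a x * b x') = (2 * δT) * ((∑ x, a x) * (∑ x', b x')) := by
                rw [Finset.sum_mul_sum, Finset.mul_sum]
                refine Finset.sum_congr rfl fun x _ => ?_
                rw [Finset.mul_sum]
              rw [this, hsa, hsb]
          _ = 2 * (δT * m) := by field_simp
      -- combine
      have hfinal : ∑ y, |mfF T μ γ y - mfF T μ' γ y| ≤ 2 * (δT * m) + 2 * (Kf * m) := by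
        calc ∑ y, |mfF T μ γ y - mfF T μ' γ y|
            ≤ ∑ y, (|∑ x, rowK T μ γ x y * (μ.1 x - μ'.1 x)|
                + |∑ x, (rowK T μ γ x y - rowK T μ' γ x y) * μ'.1 x|) := by
              refine Finset.sum_le_sum fun y _ => ?_
              rw [hdec y]
              exact abs_add_le _ _
          _ = (∑ y, |∑ x, rowK T μ γ x y * (μ.1 x - μ'.1 x)|)
              + ∑ y, |∑ x, (rowK T μ γ x y - rowK T μ' γ x y) * μ'.1 x| :=
              Finset.sum_add_distrib
          _ ≤ 2 * (δT * m) + 2 * (Kf * m) := add_le_add hA hB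
      show mdist (mfF T μ γ) (mfF T μ' γ) ≤ (δT + Kf) * m
      unfold mdist
      linarith
end

section
/- Consider the infinite-population mean-field control problem with X = U = {0,1}, deterministic agent dynamics x_{t+1} = u_t (so T(·|x,u,μ) = δ_u), cost c(x,u,μ) = 0 if μ = (1/2)δ₀ + (1/2)δ₁ or μ = δ₀, and c(x,u,μ) = 10 otherwise, initial distribution μ₀ = (1/2)δ₀ + (1/2)δ₁, and discount β ∈ (0,1). Let γ₁(·|x) := (1/2)δ₀ + (1/2)δ₁ and γ₂(·|x) := δ₀, and define the mixed policy ĝ(μ) := (1/2)γ₁(·|x) + (1/2)γ₂(·|x) (each agent using γ₁ or γ₂ independently with probability 1/2). Then the discounted cost of ĝ is K_β(μ₀, ĝ) = 10β/(1−β) > 0, whereas K_β(μ₀, g₁) = K_β(μ₀, g₂) = 0 for the pure symmetric policies g₁, g₂ using γ₁, γ₂ respectively; hence the optimal performance fails without coordination on a common optimal policy. -/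
open scoped BigOperators
open MeasureTheory Filter Topology

/-- Stage cost `k(μ,γ) = Σ_{x,u} c(x,u,μ) γ(u|x) μ(x)`. -/
noncomputable def stageCost {X U : Type*} [Fintype X] [Fintype U]
    (c : X → U → PM X → ℝ) (μ : PM X) (γ : X → PM U) : ℝ :=
  ∑ x, ∑ u, c x u μ * (γ x).1 u * μ.1 x

/-- Deterministic mean-field flow under a measure-feedback policy `g`. -/
noncomputable def flow {X U : Type*} [Fintype X] [Fintype U]
    (F : PM X → (X → PM U) → PM X) (g : PM X → X → PM U) (μ0 : PM X) : ℕ → PM X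
  | 0 => μ0
  | t + 1 => F (flow F g μ0 t) (g (flow F g μ0 t))

/-- Discounted cost `K_β(μ₀, g)` of policy `g` in the infinite-population problem. -/
noncomputable def Kval {X U : Type*} [Fintype X] [Fintype U]
    (c : X → U → PM X → ℝ) (F : PM X → (X → PM U) → PM X)
    (β : ℝ) (μ0 : PM X) (g : PM X → X → PM U) : ℝ :=
  ∑' t : ℕ, β ^ t * stageCost c (flow F g μ0 t) (g (flow F g μ0 t))

/-- Optimal value `K*_β(μ₀)` of the infinite-population problem. -/
noncomputable def Kopt {X U : Type*} [Fintype X] [Fintype U]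
    (c : X → U → PM X → ℝ) (F : PM X → (X → PM U) → PM X)
    (β : ℝ) (μ0 : PM X) : ℝ :=
  ⨅ g : PM X → X → PM U, Kval c F β μ0 g

/-- The distribution `(1/2)δ₀ + (1/2)δ₁` on `{0,1}` (with `0 = false`, `1 = true`). -/
noncomputable def pmHalf : PM Bool :=
  ⟨fun _ => 1 / 2, by
    refine ⟨fun x => by norm_num, ?_⟩
    norm_num [Fintype.sum_bool]⟩

/-- The point mass `δ₀` on `{0,1}`. -/
noncomputable def pmDelta0 : PM Bool :=
  ⟨fun y => if y = false then 1 else 0, by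
    refine ⟨fun x => by simp only []; split <;> norm_num, ?_⟩
    norm_num [Fintype.sum_bool]⟩

/-- The mixture `(1/2)γ₁ + (1/2)γ₂ = (3/4)δ₀ + (1/4)δ₁`. -/
noncomputable def pmMixed : PM Bool :=
  ⟨fun y => if y = false then 3 / 4 else 1 / 4, by
    refine ⟨fun x => by simp only []; split <;> norm_num, ?_⟩
    norm_num [Fintype.sum_bool]⟩

/-- Deterministic dynamics `x_{t+1} = u_t`: the kernel is `T(·|x,u,μ) = δ_u`. -/
noncomputable def exT : Bool → Bool → PM Bool → PM Bool :=
  fun _ u _ => ⟨fun y => if y = u then 1 else 0, by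
    refine ⟨fun x => by simp only []; split <;> norm_num, ?_⟩
    cases u <;> norm_num [Fintype.sum_bool]⟩

open Classical in
/-- The cost: `0` if the mean-field term is `(1/2)δ₀+(1/2)δ₁` or `δ₀`, and `10` otherwise. -/
noncomputable def exC : Bool → Bool → PM Bool → ℝ :=
  fun _ _ μ => if μ = pmHalf ∨ μ = pmDelta0 then 0 else 10

/-
Under the deterministic dynamics `x_{t+1} = u_t`, a policy that prescribes the same action
distribution `γ` in every state moves the population to `γ` in one step, whatever the current
distribution. Each of the three policies therefore pays the cost of `μ₀` at time `0` and the cost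
of its own action distribution at every later time. The cost vanishes at `μ₀` and at `δ₀`, but the
mixture `(3/4)δ₀ + (1/4)δ₁` costs `10`, so mixing gives `Σ_{t≥1} 10 βᵗ = 10β/(1-β)`.
-/

section ConstantPolicy

variable {X U : Type*} [Fintype X] [Fintype U]

lemma stageCost_fun_const (c : PM X → ℝ) (μ : PM X) (γ : X → PM U) :
    stageCost (fun _ _ => c) μ γ = c μ := by
  simp only [stageCost, mul_comm (c μ), mul_assoc, ← Finset.sum_mul, (γ _).2.2, one_mul, μ.2.2]

lemma Kval_const_policy (c : X → U → PM X → ℝ) (F : PM X → (X → PM U) → PM X)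
    {β : ℝ} (hβ0 : 0 ≤ β) (hβ1 : β < 1) (μ0 ν : PM X) (γ : X → PM U)
    (hF : ∀ μ, F μ γ = ν) :
    Kval c F β μ0 (fun _ => γ) = stageCost c μ0 γ + β / (1 - β) * stageCost c ν γ := by
  have hshift : (fun t : ℕ => β ^ (t + 1) * stageCost c (flow F (fun _ => γ) μ0 (t + 1)) γ) =
      fun t => β * stageCost c ν γ * β ^ t := by
    funext t
    rw [flow, hF, pow_succ]
    ring
  have hsum : Summable fun t : ℕ => β * stageCost c ν γ * β ^ t :=
    (summable_geometric_of_lt_one hβ0 hβ1).mul_left _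
  unfold Kval
  rw [tsum_eq_zero_add' (hshift ▸ hsum), hshift, tsum_mul_left,
    tsum_geometric_of_lt_one hβ0 hβ1]
  simp only [pow_zero, one_mul, flow]
  ring

end ConstantPolicy

lemma step_const_policy_eq (F : PM Bool → (Bool → PM Bool) → PM Bool)
    (hF : ∀ (μ : PM Bool) (γ : Bool → PM Bool) (y : Bool),
      (F μ γ).1 y = ∑ x, ∑ u, (exT x u μ).1 y * (γ x).1 u * μ.1 x)
    (μ γ : PM Bool) : F μ (fun _ => γ) = γ := by
  apply Subtype.ext
  funext y
  have hμ := μ.2.2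
  simp only [hF, Fintype.sum_bool, exT] at hμ ⊢
  cases y <;> simp <;> linear_combination γ.1 _ * hμ

lemma stageCost_exC (μ : PM Bool) (γ : Bool → PM Bool) :
    stageCost exC μ γ = if μ = pmHalf ∨ μ = pmDelta0 then 0 else 10 :=
  open Classical in stageCost_fun_const _ μ γ

lemma pmMixed_ne_pmHalf : pmMixed ≠ pmHalf := fun h => by
  have := congrArg (fun p : PM Bool => p.1 false) h
  norm_num [pmMixed, pmHalf] at this

lemma pmMixed_ne_pmDelta0 : pmMixed ≠ pmDelta0 := fun h => by
  have := congrArg (fun p : PM Bool => p.1 false) h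
  norm_num [pmMixed, pmDelta0] at this

/-- without coordination on a common optimal policy, the mixed policy incurs
cost `10β/(1−β) > 0`, while either pure symmetric optimal policy incurs cost `0`. -/
theorem stmt_19 (β : ℝ) (hβ0 : 0 < β) (hβ1 : β < 1)
    (F : PM Bool → (Bool → PM Bool) → PM Bool)
    (hF : ∀ (μ : PM Bool) (γ : Bool → PM Bool) (y : Bool),
      (F μ γ).1 y = ∑ x, ∑ u, (exT x u μ).1 y * (γ x).1 u * μ.1 x) :
    Kval exC F β pmHalf (fun _ _ => pmMixed) = 10 * β / (1 - β) ∧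
    0 < 10 * β / (1 - β) ∧
    Kval exC F β pmHalf (fun _ _ => pmHalf) = 0 ∧
    Kval exC F β pmHalf (fun _ _ => pmDelta0) = 0 := by
  have hK (γ : PM Bool) := Kval_const_policy exC F hβ0.le hβ1 pmHalf γ (fun _ => γ)
    (step_const_policy_eq F hF · γ)
  have hβ1' : 0 < 1 - β := by linarith
  refine ⟨?_, by positivity, ?_, ?_⟩
  · simp only [hK, stageCost_exC, pmMixed_ne_pmHalf, pmMixed_ne_pmDelta0]
    field_simp
    simp
  · simp [hK, stageCost_exC]
  · simp [hK, stageCost_exC]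
end
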